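/- arXiv:math/0601760 — 3 statements merged into one kernel-verified Lean document; each statement's English description precedes it below -/
import Mathlib

section
/- Let D be the ℚ-linear operator on the polynomial ring ℚ[x] defined by D(P) = x · (dP/dx). For every integer d ≥ 0: the evaluation at x = 1 of D^i applied to the polynomial (1 - x)^d equals 0 for every i with 0 ≤ i < d, and the evaluation at x = 1 of D^d applied to (1 - x)^d equals (-1)^d · d!. -/
/-!
Applying `D = X · d/dx` to `(1 - X)^(k+1) · P` lowers the exponent of the factor `1 - X` by one
and multiplies the value of the cofactor at `1` by `-(k+1)`. Hence
`D^i ((1 - X)^d) = (1 - X)^(d-i) · Q` with `Q(1) = (-1)^i · d (d-1) ⋯ (d-i+1)` for `i ≤ d`,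
which vanishes at `1` for `i < d` and equals `(-1)^d · d!` for `i = d`.
-/

open Polynomial

noncomputable def Dop (P : Polynomial ℚ) : Polynomial ℚ := X * derivative P

lemma Dop_one_sub_X_pow_succ_mul (n : ℕ) (P : ℚ[X]) :
    Dop ((1 - X) ^ (n + 1) * P) =
      (1 - X) ^ n * (X * ((1 - X) * derivative P - (n + 1 : ℚ[X]) * P)) := by
  simp only [Dop, derivative_mul, derivative_pow_succ, derivative_sub, derivative_one,
    derivative_X, map_add, map_natCast, map_one]
  ring

lemma Dop_iterate_one_sub_X_pow_add_mul (i n : ℕ) (P : ℚ[X]) :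
    ∃ Q : ℚ[X], Dop^[i] ((1 - X) ^ (n + i) * P) = (1 - X) ^ n * Q ∧
      Q.eval 1 = (-1) ^ i * (n + i).descFactorial i * P.eval 1 := by
  induction i generalizing P with
  | zero => exact ⟨P, by simp⟩
  | succ i ih =>
    obtain ⟨Q, hQ, hQ_one⟩ := ih (X * ((1 - X) * derivative P - (n + i + 1 : ℚ[X]) * P))
    refine ⟨Q, ?_, ?_⟩
    · rw [Function.iterate_succ_apply, ← add_assoc, Dop_one_sub_X_pow_succ_mul]
      exact_mod_cast hQ
    · rw [hQ_one, ← add_assoc, Nat.succ_descFactorial_succ]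
      simp only [eval_mul, eval_X, eval_sub, eval_one, sub_self, zero_mul, eval_add,
        eval_natCast, zero_sub, mul_neg, one_mul, Nat.cast_mul, Nat.cast_add, Nat.cast_one]
      ring

/-- For every `d ≥ 0`: the evaluation at `x = 1` of `D^i ((1-x)^d)`
equals `0` for every `0 ≤ i < d`, and the evaluation at `x = 1` of `D^d ((1-x)^d)`
equals `(-1)^d · d!`. -/
theorem Dop_iterate_one_sub_X_pow (d : ℕ) :
    (∀ i : ℕ, i < d → (Dop^[i] ((1 - X) ^ d)).eval 1 = 0) ∧
      (Dop^[d] ((1 - X) ^ d)).eval 1 = (-1 : ℚ) ^ d * d.factorial := by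
  constructor
  · intro i hi
    obtain ⟨Q, hQ, -⟩ := Dop_iterate_one_sub_X_pow_add_mul i (d - i) 1
    rw [Nat.sub_add_cancel hi.le, mul_one] at hQ
    simp [hQ, Nat.sub_ne_zero_of_lt hi]
  · obtain ⟨Q, hQ, hQ_one⟩ := Dop_iterate_one_sub_X_pow_add_mul d 0 1
    rw [zero_add, mul_one] at hQ
    simp [hQ, hQ_one, Nat.descFactorial_self]
end

section
/- Let n ≥ 1 and let d_1, …, d_n and e_1, …, e_n be nonnegative integers with e_1 + ⋯ + e_n ≤ d_1 + ⋯ + d_n. Then the sum over all tuples (b_1, …, b_n) with 1 ≤ b_i ≤ d_i + 1 of the product ∏_{i=1}^n c_{b_i}^{d_i} · b_i^{e_i} equals 1 if e_i = d_i for all i, and equals 0 otherwise. -/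
/- For integers `d ≥ 0` and `1 ≤ b ≤ d+1`, the ELSV-inversion constant
`c_b^d = (-1)^(d-b+1) / ((d-b+1)! (b-1)!)` (a rational number).
Since `1 ≤ b ≤ d+1`, we write the exponent/factorial argument `d - b + 1` as
`d + 1 - b`, which agrees with it for all such `b` (here using natural subtraction). -/
noncomputable def cELSV (d b : ℕ) : ℚ :=
  (-1 : ℚ) ^ (d + 1 - b) / ((d + 1 - b).factorial * (b - 1).factorial)

/-- The alternating finite-difference sum `A d e = ∑_{k=0}^{d} (-1)^{d-k} C(d,k) (k+1)^e`. -/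
noncomputable def Aux (d e : ℕ) : ℚ :=
  ∑ k ∈ Finset.range (d + 1), (-1 : ℚ) ^ (d - k) * (d.choose k) * (k + 1) ^ e

lemma aux_rec (d e : ℕ) :
    Aux (d + 1) e = ∑ m ∈ Finset.range e, (e.choose m : ℚ) * Aux d m := by
  have h1 : Aux (d + 1) e
      = (∑ k ∈ Finset.range (d + 1),
          (-1 : ℚ) ^ (d - k) * (d.choose k) * (k + 2) ^ e)
        + ((∑ k ∈ Finset.range (d + 1),
          (-1 : ℚ) ^ (d - k) * (d.choose (k + 1)) * (k + 2) ^ e) + (-1 : ℚ) ^ (d + 1)) := by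
    rw [Aux, Finset.sum_range_succ', ← add_assoc, ← Finset.sum_add_distrib]
    congr 1
    · refine Finset.sum_congr rfl fun k hk => ?_
      have hd : d + 1 - (k + 1) = d - k := by omega
      rw [hd, Nat.choose_succ_succ]
      push_cast
      ring
    · simp
  have h2 : (∑ k ∈ Finset.range (d + 1),
        (-1 : ℚ) ^ (d - k) * (d.choose (k + 1)) * (k + 2) ^ e) + (-1 : ℚ) ^ (d + 1)
      = -Aux d e := by
    have hT : (∑ k ∈ Finset.range (d + 1),
          (-1 : ℚ) ^ (d - k) * (d.choose (k + 1)) * (k + 2) ^ e)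
        = ∑ k ∈ Finset.range d, (-1 : ℚ) ^ (d - k) * (d.choose (k + 1)) * (k + 2) ^ e := by
      rw [Finset.sum_range_succ]
      simp [Nat.choose_succ_self]
    rw [hT]
    have hA : Aux d e = (∑ k ∈ Finset.range d,
        (-1 : ℚ) ^ (d - (k + 1)) * (d.choose (k + 1)) * (k + 2) ^ e) + (-1 : ℚ) ^ d := by
      rw [Aux, Finset.sum_range_succ']
      congr 1
      · refine Finset.sum_congr rfl fun k hk => ?_
        push_cast
        ring
      · simp
    rw [hA]
    have : ∀ k ∈ Finset.range d,
        (-1 : ℚ) ^ (d - k) * (d.choose (k + 1)) * (k + 2) ^ e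
        = -((-1 : ℚ) ^ (d - (k + 1)) * (d.choose (k + 1)) * (k + 2) ^ e) := by
      intro k hk
      rw [Finset.mem_range] at hk
      have : d - k = (d - (k + 1)) + 1 := by omega
      rw [this]
      ring
    rw [Finset.sum_congr rfl this, Finset.sum_neg_distrib]
    ring
  have h3 : (∑ k ∈ Finset.range (d + 1),
        (-1 : ℚ) ^ (d - k) * (d.choose k) * (k + 2) ^ e)
      = ∑ m ∈ Finset.range (e + 1), (e.choose m : ℚ) * Aux d m := by
    calc (∑ k ∈ Finset.range (d + 1),
            (-1 : ℚ) ^ (d - k) * (d.choose k) * (k + 2) ^ e)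
        = ∑ k ∈ Finset.range (d + 1), ∑ m ∈ Finset.range (e + 1),
            (e.choose m : ℚ) * ((-1 : ℚ) ^ (d - k) * (d.choose k) * (k + 1) ^ m) := by
          refine Finset.sum_congr rfl fun k _ => ?_
          have hbin : ((k : ℚ) + 2) ^ e
              = ∑ m ∈ Finset.range (e + 1), ((k : ℚ) + 1) ^ m * (e.choose m) := by
            rw [show ((k : ℚ) + 2) = ((k : ℚ) + 1) + 1 by ring, add_pow]
            simp
          rw [hbin, Finset.mul_sum]
          refine Finset.sum_congr rfl fun m _ => ?_
          ring
      _ = ∑ m ∈ Finset.range (e + 1), (e.choose m : ℚ) * Aux d m := by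
          rw [Finset.sum_comm]
          refine Finset.sum_congr rfl fun m _ => ?_
          rw [Aux, Finset.mul_sum]
  rw [h1, h2, h3, Finset.sum_range_succ]
  simp [Aux]

lemma aux_eq (d e : ℕ) (h : e ≤ d) :
    Aux d e = if e = d then (d.factorial : ℚ) else 0 := by
  induction d generalizing e with
  | zero =>
    interval_cases e
    simp [Aux]
  | succ d ih =>
    rw [aux_rec]
    rcases eq_or_lt_of_le h with rfl | hlt
    · have : ∀ m ∈ Finset.range (d + 1), ((d+1).choose m : ℚ) * Aux d m
          = if m = d then ((d+1).choose d : ℚ) * d.factorial else 0 := by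
        intro m hm
        rw [Finset.mem_range] at hm
        rw [ih m (by omega)]
        split <;> simp_all
      rw [Finset.sum_congr rfl this, Finset.sum_ite_eq' (Finset.range (d+1)) d]
      simp only [Finset.mem_range, Nat.lt_succ_self, if_true]
      rw [Nat.choose_succ_self_right]
      push_cast [Nat.factorial_succ]
      ring
    · have : ∀ m ∈ Finset.range e, (e.choose m : ℚ) * Aux d m = 0 := by
        intro m hm
        rw [Finset.mem_range] at hm
        rw [ih m (by omega)]
        have : m ≠ d := by omega
        simp [this]
      rw [Finset.sum_congr rfl this, Finset.sum_const_zero, if_neg (by omega)]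

/-- The one-variable identity. -/
lemma sum_cELSV_pow (d e : ℕ) (h : e ≤ d) :
    ∑ b ∈ Finset.Icc 1 (d + 1), cELSV d b * (b : ℚ) ^ e
      = if e = d then 1 else 0 := by
  have hmap : ∑ b ∈ Finset.Icc 1 (d + 1), cELSV d b * (b : ℚ) ^ e
      = ∑ k ∈ Finset.range (d + 1), cELSV d (k + 1) * (((k : ℚ)) + 1) ^ e := by
    rw [← Finset.Ico_add_one_right_eq_Icc, Finset.sum_Ico_eq_sum_range]
    refine Finset.sum_congr (by congr 1) fun k _ => ?_
    rw [add_comm 1 k]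
    push_cast
    ring
  rw [hmap]
  have hterm : ∀ k ∈ Finset.range (d + 1),
      cELSV d (k + 1) * ((k : ℚ) + 1) ^ e
      = ((-1 : ℚ) ^ (d - k) * (d.choose k) * (k + 1) ^ e) / d.factorial := by
    intro k hk
    rw [Finset.mem_range] at hk
    have hk' : k ≤ d := by omega
    have hch : (d.choose k : ℚ) * (k.factorial) * ((d - k).factorial) = d.factorial := by
      exact_mod_cast congrArg (Nat.cast : ℕ → ℚ)
        (Nat.choose_mul_factorial_mul_factorial hk')
    rw [cELSV]
    have h1 : d + 1 - (k + 1) = d - k := by omega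
    have h2 : k + 1 - 1 = k := by omega
    rw [h1, h2]
    have hne1 : ((d - k).factorial : ℚ) ≠ 0 := by positivity
    have hne2 : ((k).factorial : ℚ) ≠ 0 := by positivity
    have hne3 : ((d).factorial : ℚ) ≠ 0 := by positivity
    field_simp
    linear_combination (-1 : ℚ) * hch
  rw [Finset.sum_congr rfl hterm, ← Finset.sum_div]
  have : (∑ k ∈ Finset.range (d + 1), (-1 : ℚ) ^ (d - k) * (d.choose k) * ((k : ℚ) + 1) ^ e)
      = Aux d e := by
    rw [Aux]
  rw [this, aux_eq d e h]
  split
  · field_simp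
  · simp

/-- Let `n ≥ 1` and let `d_1, …, d_n`, `e_1, …, e_n` be nonnegative
integers with `e_1 + ⋯ + e_n ≤ d_1 + ⋯ + d_n`.  Then the sum over all tuples
`(b_1, …, b_n)` with `1 ≤ b_i ≤ d_i + 1` of `∏_i c_{b_i}^{d_i} · b_i^{e_i}` equals
`1` if `e_i = d_i` for all `i`, and `0` otherwise. -/
theorem sum_prod_cELSV_pow (n : ℕ) (hn : 1 ≤ n) (d e : Fin n → ℕ)
    (hle : ∑ i, e i ≤ ∑ i, d i) :
    ∑ b ∈ Fintype.piFinset (fun i : Fin n => Finset.Icc 1 (d i + 1)),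
        ∏ i : Fin n, cELSV (d i) (b i) * (b i : ℚ) ^ (e i) =
      if e = d then 1 else 0 := by
  rw [← Finset.prod_univ_sum (fun i : Fin n => Finset.Icc 1 (d i + 1))
      (fun i b => cELSV (d i) b * (b : ℚ) ^ (e i))]
  by_cases hed : e = d
  · subst hed
    rw [if_pos rfl]
    exact Finset.prod_eq_one fun i _ => by rw [sum_cELSV_pow (e i) (e i) le_rfl]; simp
  · rw [if_neg hed]
    have hj : ∃ j, e j < d j := by
      by_contra hc
      push_neg at hc
      have hsum : ∑ i, d i ≤ ∑ i, e i := Finset.sum_le_sum fun i _ => hc i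
      have heq : ∑ i, e i = ∑ i, d i := le_antisymm hle hsum
      have : ∀ i ∈ Finset.univ, d i = e i :=
        (Finset.sum_eq_sum_iff_of_le fun i _ => hc i).mp heq.symm
      exact hed (funext fun i => (this i (Finset.mem_univ i)).symm)
    obtain ⟨j, hj⟩ := hj
    apply Finset.prod_eq_zero (Finset.mem_univ j)
    rw [sum_cELSV_pow (d j) (e j) (le_of_lt hj)]
    simp [Nat.ne_of_lt hj]
end

section
/- Let N ≥ 1 and let c_1, …, c_N be rational numbers. Let τ = 1 + ∑_{i=1}^N c_i·s_i, where s_i is the Schur polynomial of the one-part partition (i). Then the formal power series H = log τ (the formal logarithm, well defined since τ has constant term 1) satisfies the KP equation ∂²H/∂p_2² = ∂²H/∂p_3∂p_1 − (1/2)·(∂²H/∂p_1²)² − (1/12)·∂⁴H/∂p_1⁴. -/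
/-!
We work with formal power series in the variables `p_1, p_2, …` over `ℚ`,
formalized as `MvPowerSeries ℕ ℚ` with `p_k = X k` for `k ≥ 1` (the variable with
index `0` is unused: it occurs in none of the objects defined below, so all
statements take place in `ℚ[[p_1, p_2, …]]`).  The variable `p_k` has weighted
degree `k`.
-/

open MvPolynomial

/-- The power series `L(z) = ∑_{k ≥ 1} p_k z^k / k` over `ℚ[p_1, p_2, …]`. -/
noncomputable def Lser : PowerSeries (MvPolynomial ℕ ℚ) :=
  PowerSeries.mk fun k => if k = 0 then 0 else C ((k : ℚ)⁻¹) * X k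

/-- The Schur polynomial `s_i` of the one-part partition `(i)`, defined by the
generating series identity `∑_{i≥0} s_i z^i = exp(L(z))` (so `s_0 = 1`, `s_1 = p_1`,
`s_2 = (p_1² + p_2)/2`, …): since `L` has zero constant term, the `z^i`-coefficient
of `exp(L(z)) = ∑_m L^m/m!` only receives contributions from `m ≤ i`, so it is the
following finite sum. -/
noncomputable def schurOnePart (i : ℕ) : MvPolynomial ℕ ℚ :=
  ∑ m ∈ Finset.range (i + 1), C ((m.factorial : ℚ)⁻¹) * PowerSeries.coeff i (Lser ^ m)

/-- The weighted degree of a monomial `m = ∏ p_k^{m_k}`, namely `∑ k·m_k`. -/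
noncomputable def wdeg (m : ℕ →₀ ℕ) : ℕ := m.sum fun k e => k * e

/-- The partial derivative `∂/∂p_i` of a formal power series, coefficientwise. -/
noncomputable def psDeriv (i : ℕ) (Φ : MvPowerSeries ℕ ℚ) : MvPowerSeries ℕ ℚ :=
  fun m => ((m i : ℚ) + 1) * MvPowerSeries.coeff (m + Finsupp.single i 1) Φ

/-- The formal logarithm `log Ψ = ∑_{k ≥ 1} (-1)^{k+1} (Ψ - 1)^k / k` of a formal
power series `Ψ` whose constant term is `1`.  It is well defined coefficientwise:
when `Ψ - 1` is supported on monomials of positive weighted degree (as is the case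
for `Ψ = τ` below, since `s_i` is weighted homogeneous of weighted degree `i ≥ 1`),
the coefficient of a monomial `μ` in `(Ψ - 1)^k` vanishes for `k > wdeg μ`, so the
coefficient of `μ` in `log Ψ` is the following finite sum. -/
noncomputable def psLog (Ψ : MvPowerSeries ℕ ℚ) : MvPowerSeries ℕ ℚ :=
  fun μ => ∑ k ∈ Finset.Icc 1 (wdeg μ),
    ((-1 : ℚ) ^ (k + 1) / k) * MvPowerSeries.coeff μ ((Ψ - 1) ^ k)

lemma psDeriv_coeff (i : ℕ) (Φ : MvPowerSeries ℕ ℚ) (m : ℕ →₀ ℕ) :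
    MvPowerSeries.coeff m (psDeriv i Φ) =
      ((m i : ℚ) + 1) * MvPowerSeries.coeff (m + Finsupp.single i 1) Φ := rfl

lemma psDeriv_add (i : ℕ) (Φ Ψ : MvPowerSeries ℕ ℚ) :
    psDeriv i (Φ + Ψ) = psDeriv i Φ + psDeriv i Ψ := by
  ext m
  simp [psDeriv_coeff, map_add, mul_add]

lemma psDeriv_smul (i : ℕ) (q : ℚ) (Φ : MvPowerSeries ℕ ℚ) :
    psDeriv i (q • Φ) = q • psDeriv i Φ := by
  ext m
  simp [psDeriv_coeff]
  ring

lemma psDeriv_one (i : ℕ) : psDeriv i (1 : MvPowerSeries ℕ ℚ) = 0 := by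
  ext m
  have h : m + Finsupp.single i 1 ≠ 0 := by
    intro h
    have := DFunLike.congr_fun h i
    simp [Finsupp.single_apply] at this
  simp [psDeriv_coeff, MvPowerSeries.coeff_one, h]

lemma psDeriv_neg (i : ℕ) (Φ : MvPowerSeries ℕ ℚ) : psDeriv i (-Φ) = -psDeriv i Φ := by
  ext m; simp [psDeriv_coeff]

lemma psDeriv_sub (i : ℕ) (Φ Ψ : MvPowerSeries ℕ ℚ) :
    psDeriv i (Φ - Ψ) = psDeriv i Φ - psDeriv i Ψ := by
  ext m; simp [psDeriv_coeff]; ring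

private lemma sub_single_add (i : ℕ) (a : ℕ →₀ ℕ) (h : a i ≠ 0) :
    (a - Finsupp.single i 1) + Finsupp.single i 1 = a := by
  ext j
  simp only [Finsupp.add_apply, Finsupp.tsub_apply, Finsupp.single_apply]
  by_cases hj : i = j
  · subst hj; simp; omega
  · simp [hj]

lemma psDeriv_mul (i : ℕ) (Φ Ψ : MvPowerSeries ℕ ℚ) :
    psDeriv i (Φ * Ψ) = psDeriv i Φ * Ψ + Φ * psDeriv i Ψ := by
  classical
  ext m
  set e := Finsupp.single i 1 with he
  rw [map_add, MvPowerSeries.coeff_mul, MvPowerSeries.coeff_mul, psDeriv_coeff,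
    MvPowerSeries.coeff_mul]
  have key : ∀ (p : (ℕ →₀ ℕ) × (ℕ →₀ ℕ)), p ∈ Finset.HasAntidiagonal.antidiagonal (m + e) →
      ((m i : ℚ) + 1) * (MvPowerSeries.coeff p.1 Φ * MvPowerSeries.coeff p.2 Ψ) =
      (p.1 i : ℚ) * (MvPowerSeries.coeff p.1 Φ * MvPowerSeries.coeff p.2 Ψ)
      + (p.2 i : ℚ) * (MvPowerSeries.coeff p.1 Φ * MvPowerSeries.coeff p.2 Ψ) := by
    intro p hp
    rw [Finset.HasAntidiagonal.mem_antidiagonal] at hp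
    have : p.1 i + p.2 i = m i + 1 := by
      have := DFunLike.congr_fun hp i
      simpa [he, Finsupp.single_apply] using this
    have : (p.1 i : ℚ) + (p.2 i : ℚ) = (m i : ℚ) + 1 := by exact_mod_cast this
    rw [← this]; ring
  rw [Finset.mul_sum, Finset.sum_congr rfl key, Finset.sum_add_distrib]
  congr 1
  · -- first sum
    rw [← Finset.sum_filter_of_ne (p := fun p => p.1 i ≠ 0)
      (by intro p _ h; intro h0; apply h; simp [h0])]
    refine Finset.sum_bij' (fun p _ => (p.1 - e, p.2)) (fun q _ => (q.1 + e, q.2)) ?_ ?_ ?_ ?_ ?_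
    · intro p hp
      simp only [Finset.mem_filter, Finset.HasAntidiagonal.mem_antidiagonal] at hp ⊢
      obtain ⟨hp1, hp2⟩ := hp
      ext j
      have := DFunLike.congr_fun hp1 j
      simp only [Finsupp.add_apply, Finsupp.tsub_apply, Finsupp.single_apply, he] at this ⊢
      by_cases hj : i = j
      · subst hj; simp at this ⊢; omega
      · simp [hj] at this ⊢; omega
    · intro q hq
      simp only [Finset.HasAntidiagonal.mem_antidiagonal] at hq
      simp only [Finset.mem_filter, Finset.HasAntidiagonal.mem_antidiagonal]
      constructor
      · rw [← hq]; ext j; simp [he, Finsupp.single_apply]; ring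
      · simp [he, Finsupp.single_apply]
    · intro p hp
      simp only [Finset.mem_filter] at hp
      have := sub_single_add i p.1 hp.2
      simp [he, this]
    · intro q hq
      simp [he]
    · intro p hp
      simp only [Finset.mem_filter] at hp
      rw [psDeriv_coeff]
      have h1 : (p.1 - e) + e = p.1 := sub_single_add i p.1 hp.2
      rw [h1]
      have h2 : ((p.1 - e) i : ℚ) + 1 = (p.1 i : ℚ) := by
        have : (p.1 - e) i = p.1 i - 1 := by simp [he, Finsupp.single_apply]
        rw [this]
        have : 1 ≤ p.1 i := Nat.one_le_iff_ne_zero.mpr hp.2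
        push_cast [this]; ring
      rw [h2]; ring
  · -- second sum
    rw [← Finset.sum_filter_of_ne (p := fun p => p.2 i ≠ 0)
      (by intro p _ h; intro h0; apply h; simp [h0])]
    refine Finset.sum_bij' (fun p _ => (p.1, p.2 - e)) (fun q _ => (q.1, q.2 + e)) ?_ ?_ ?_ ?_ ?_
    · intro p hp
      simp only [Finset.mem_filter, Finset.HasAntidiagonal.mem_antidiagonal] at hp ⊢
      obtain ⟨hp1, hp2⟩ := hp
      ext j
      have := DFunLike.congr_fun hp1 j
      simp only [Finsupp.add_apply, Finsupp.tsub_apply, Finsupp.single_apply, he] at this ⊢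
      by_cases hj : i = j
      · subst hj; simp at this ⊢; omega
      · simp [hj] at this ⊢; omega
    · intro q hq
      simp only [Finset.HasAntidiagonal.mem_antidiagonal] at hq
      simp only [Finset.mem_filter, Finset.HasAntidiagonal.mem_antidiagonal]
      constructor
      · rw [← hq]; ext j; simp [he, Finsupp.single_apply]; ring
      · simp [he, Finsupp.single_apply]
    · intro p hp
      simp only [Finset.mem_filter] at hp
      have := sub_single_add i p.2 hp.2
      simp [he, this]
    · intro q hq
      simp [he]
    · intro p hp
      simp only [Finset.mem_filter] at hp
      rw [psDeriv_coeff]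
      have h1 : (p.2 - e) + e = p.2 := sub_single_add i p.2 hp.2
      rw [h1]
      have h2 : ((p.2 - e) i : ℚ) + 1 = (p.2 i : ℚ) := by
        have : (p.2 - e) i = p.2 i - 1 := by simp [he, Finsupp.single_apply]
        rw [this]
        have : 1 ≤ p.2 i := Nat.one_le_iff_ne_zero.mpr hp.2
        push_cast [this]; ring
      rw [h2]; ring

lemma wdeg_eq_weight (m : ℕ →₀ ℕ) : wdeg m = Finsupp.weight (id : ℕ → ℕ) m := by
  rw [wdeg, Finsupp.weight_apply, Finsupp.sum, Finsupp.sum]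
  exact Finset.sum_congr rfl fun k _ => by simp [mul_comm]

lemma wdeg_add (a b : ℕ →₀ ℕ) : wdeg (a + b) = wdeg a + wdeg b := by
  simp [wdeg_eq_weight, map_add]

lemma wdeg_single (i : ℕ) : wdeg (Finsupp.single i 1) = i := by
  simp [wdeg, Finsupp.sum_single_index]

-- order lemma
lemma coeff_Lpow_eq_zero : ∀ (m j : ℕ), j < m → PowerSeries.coeff j (Lser ^ m) = 0 := by
  intro m
  induction m with
  | zero => intro j hj; omega
  | succ m ih =>
    intro j hj
    rw [pow_succ, PowerSeries.coeff_mul]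
    apply Finset.sum_eq_zero
    intro p hp
    rw [Finset.HasAntidiagonal.mem_antidiagonal] at hp
    by_cases h1 : p.1 < m
    · rw [ih p.1 h1, zero_mul]
    · have : p.2 = 0 := by omega
      rw [this]
      have : PowerSeries.coeff 0 Lser = 0 := by
        simp [Lser]
      rw [this, mul_zero]

-- homogeneity
lemma Lser_coeff_homog (j : ℕ) :
    IsWeightedHomogeneous (id : ℕ → ℕ) (PowerSeries.coeff j Lser) j := by
  rw [Lser, PowerSeries.coeff_mk]
  by_cases hj : j = 0
  · simp [hj]
    exact isWeightedHomogeneous_zero _ _ _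
  · simp only [hj, if_false]
    have := (isWeightedHomogeneous_C (id : ℕ → ℕ) ((j:ℚ)⁻¹) (R := ℚ)).mul
      (isWeightedHomogeneous_X ℚ (id : ℕ → ℕ) j)
    simpa using this

lemma Lpow_coeff_homog (m j : ℕ) :
    IsWeightedHomogeneous (id : ℕ → ℕ) (PowerSeries.coeff j (Lser ^ m)) j := by
  induction m generalizing j with
  | zero =>
    rw [pow_zero, PowerSeries.coeff_one]
    by_cases hj : j = 0
    · subst hj; simp; exact isWeightedHomogeneous_one _ _
    · simp [hj]; exact isWeightedHomogeneous_zero _ _ _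
  | succ m ih =>
    rw [pow_succ, PowerSeries.coeff_mul]
    apply IsWeightedHomogeneous.sum
    intro p hp
    rw [Finset.HasAntidiagonal.mem_antidiagonal] at hp
    have := (ih p.1).mul (Lser_coeff_homog p.2)
    rwa [hp] at this

lemma schur_homog (i : ℕ) :
    IsWeightedHomogeneous (id : ℕ → ℕ) (schurOnePart i) i := by
  rw [schurOnePart]
  apply IsWeightedHomogeneous.sum
  intro m _
  have := (isWeightedHomogeneous_C (id : ℕ → ℕ) ((m.factorial : ℚ)⁻¹) (R := ℚ)).mul
    (Lpow_coeff_homog m i)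
  simpa using this

lemma schur_coeff_eq_zero {i : ℕ} {d : ℕ →₀ ℕ} (h : wdeg d ≠ i) :
    MvPolynomial.coeff d (schurOnePart i) = 0 := by
  apply (schur_homog i).coeff_eq_zero
  rwa [← wdeg_eq_weight]

-- coeff of pderiv
lemma coeff_pderiv (i : ℕ) (P : MvPolynomial ℕ ℚ) (m : ℕ →₀ ℕ) :
    MvPolynomial.coeff m (pderiv i P) =
      ((m i : ℚ) + 1) * MvPolynomial.coeff (m + Finsupp.single i 1) P := by
  induction P using MvPolynomial.induction_on' with
  | monomial s a =>
    rw [pderiv_monomial, coeff_monomial, coeff_monomial]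
    by_cases h : s = m + Finsupp.single i 1
    · subst h
      have h1 : m + Finsupp.single i 1 - Finsupp.single i 1 = m := by
        ext j; simp [Finsupp.single_apply]
      rw [if_pos h1, if_pos rfl]
      simp [Finsupp.add_apply]
      ring
    · rw [if_neg h]
      by_cases h1 : s - Finsupp.single i 1 = m
      · rw [if_pos h1]
        have h2 : s i = 0 := by
          by_contra h2
          exact h (by rw [← sub_single_add i s h2, h1])
        rw [h2]; simp
      · rw [if_neg h1]; simp
  | add p q ihp ihq =>
    rw [map_add, coeff_add, coeff_add, ihp, ihq]; ring

lemma coe_psDeriv (i : ℕ) (P : MvPolynomial ℕ ℚ) :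
    psDeriv i (P : MvPowerSeries ℕ ℚ) = ((pderiv i P : MvPolynomial ℕ ℚ) : MvPowerSeries ℕ ℚ) := by
  ext m
  rw [psDeriv_coeff, MvPolynomial.coeff_coe, MvPolynomial.coeff_coe, coeff_pderiv]

-- coefficientwise pderiv on PowerSeries over MvPolynomial
noncomputable def Dz (k : ℕ) (Φ : PowerSeries (MvPolynomial ℕ ℚ)) : PowerSeries (MvPolynomial ℕ ℚ) :=
  PowerSeries.mk fun j => pderiv k (PowerSeries.coeff j Φ)

lemma Dz_coeff (k j : ℕ) (Φ : PowerSeries (MvPolynomial ℕ ℚ)) :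
    PowerSeries.coeff j (Dz k Φ) = pderiv k (PowerSeries.coeff j Φ) := by
  rw [Dz, PowerSeries.coeff_mk]

lemma Dz_mul (k : ℕ) (Φ Ψ : PowerSeries (MvPolynomial ℕ ℚ)) :
    Dz k (Φ * Ψ) = Dz k Φ * Ψ + Φ * Dz k Ψ := by
  refine PowerSeries.ext fun j => ?_
  rw [Dz_coeff, PowerSeries.coeff_mul, map_sum, map_add, PowerSeries.coeff_mul,
    PowerSeries.coeff_mul, ← Finset.sum_add_distrib]
  exact Finset.sum_congr rfl fun p _ => by rw [pderiv_mul, Dz_coeff, Dz_coeff]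

lemma Dz_L (k : ℕ) (hk : 1 ≤ k) :
    Dz k Lser = PowerSeries.C (C (k:ℚ)⁻¹) * (PowerSeries.X : PowerSeries (MvPolynomial ℕ ℚ)) ^ k := by
  ext j
  rw [Dz_coeff, PowerSeries.coeff_C_mul, PowerSeries.coeff_X_pow, Lser, PowerSeries.coeff_mk]
  by_cases hj : j = 0
  · subst hj
    have : (0 : ℕ) ≠ k := by omega
    simp [this]
  · rw [if_neg hj, pderiv_C_mul, pderiv_X]
    by_cases hkj : j = k
    · subst hkj; simp
    · have : k ≠ j := fun h => hkj h.symm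
      simp [Pi.single_apply, this, hkj]

lemma Dz_Lpow (k : ℕ) (hk : 1 ≤ k) : ∀ m : ℕ,
    Dz k (Lser ^ (m + 1)) =
      (m + 1) • (Lser ^ m * (PowerSeries.C (C (k:ℚ)⁻¹) * (PowerSeries.X : PowerSeries (MvPolynomial ℕ ℚ)) ^ k)) := by
  intro m
  induction m with
  | zero => simp [Dz_L k hk]
  | succ m ih =>
    have hmul : Lser ^ m * (PowerSeries.C (C (k:ℚ)⁻¹) * PowerSeries.X ^ k) * Lser
        = Lser ^ (m+1) * (PowerSeries.C (C (k:ℚ)⁻¹) * PowerSeries.X ^ k) := by ring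
    rw [pow_succ, Dz_mul, ih, Dz_L k hk, smul_mul_assoc, hmul, succ_nsmul, succ_nsmul, succ_nsmul]

lemma pderiv_coeff_Lpow (k i m : ℕ) (hk : 1 ≤ k) :
    pderiv k (PowerSeries.coeff i (Lser ^ (m+1))) =
      if k ≤ i then (m+1) • (PowerSeries.coeff (i-k) (Lser ^ m) * C ((k:ℚ)⁻¹)) else 0 := by
  rw [← Dz_coeff, Dz_Lpow k hk m, map_nsmul]
  have hre : Lser ^ m * (PowerSeries.C (C (k:ℚ)⁻¹) * PowerSeries.X ^ k)
      = (Lser ^ m * PowerSeries.C (C (k:ℚ)⁻¹)) * PowerSeries.X ^ k := by ring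
  rw [hre, PowerSeries.coeff_mul_X_pow', PowerSeries.coeff_mul_C]
  by_cases h : k ≤ i <;> simp [h]

lemma pderiv_schur (k i : ℕ) (hk : 1 ≤ k) :
    pderiv k (schurOnePart i) =
      if k ≤ i then C ((k:ℚ)⁻¹) * schurOnePart (i - k) else 0 := by
  have h0 : pderiv k (C ((Nat.factorial 0 : ℚ)⁻¹) * PowerSeries.coeff i (Lser ^ 0)) = 0 := by
    rw [pderiv_C_mul, pow_zero, PowerSeries.coeff_one]
    by_cases hi : i = 0 <;> simp [hi]
  rw [schurOnePart]
  by_cases h : k ≤ i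
  · rw [if_pos h, Finset.sum_range_succ', map_add, map_sum, h0, add_zero]
    have hterm : ∀ m ∈ Finset.range i,
        pderiv k (C (((m+1).factorial : ℚ)⁻¹) * PowerSeries.coeff i (Lser ^ (m+1)))
        = C ((k:ℚ)⁻¹) * (C ((m.factorial : ℚ)⁻¹) * PowerSeries.coeff (i-k) (Lser ^ m)) := by
      intro m _
      have hfac : (((m+1).factorial : ℚ))⁻¹ * (((m+1 : ℕ) : ℚ)) = ((m.factorial : ℚ))⁻¹ := by
        rw [Nat.factorial_succ]
        push_cast
        rw [mul_inv]
        have h1 : ((m+1 : ℕ) : ℚ) ≠ 0 := by positivity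
        have h2 : ((m.factorial : ℚ)) ≠ 0 := by
          exact_mod_cast Nat.factorial_ne_zero m
        push_cast
        field_simp
      rw [pderiv_C_mul, pderiv_coeff_Lpow k i m hk, if_pos h, nsmul_eq_mul,
        show ((m+1 : ℕ) : MvPolynomial ℕ ℚ) = C (((m+1:ℕ)) : ℚ) from (map_natCast C (m+1)).symm]
      calc C (((m+1).factorial : ℚ)⁻¹) * (C (((m+1:ℕ)) : ℚ) * (PowerSeries.coeff (i-k) (Lser ^ m) * C ((k:ℚ)⁻¹)))
          = (C (((m+1).factorial : ℚ)⁻¹) * C (((m+1:ℕ)) : ℚ)) * PowerSeries.coeff (i-k) (Lser ^ m) * C ((k:ℚ)⁻¹) := by ring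
        _ = C ((m.factorial : ℚ)⁻¹) * PowerSeries.coeff (i-k) (Lser ^ m) * C ((k:ℚ)⁻¹) := by
            rw [← C_mul, hfac]
        _ = C ((k:ℚ)⁻¹) * (C ((m.factorial : ℚ)⁻¹) * PowerSeries.coeff (i-k) (Lser ^ m)) := by ring
    rw [Finset.sum_congr rfl hterm, ← Finset.mul_sum]
    congr 1
    rw [schurOnePart]
    refine (Finset.sum_subset (Finset.range_subset_range.mpr (by omega)) ?_).symm
    intro m _ hm
    rw [Finset.mem_range, not_lt] at hm
    rw [coeff_Lpow_eq_zero m (i-k) (by omega), mul_zero]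
  · rw [if_neg h, map_sum]
    apply Finset.sum_eq_zero
    intro m _
    cases m with
    | zero => exact h0
    | succ m => rw [pderiv_C_mul, pderiv_coeff_Lpow k i m hk, if_neg h, mul_zero]

lemma psLog_coeff (Ψ : MvPowerSeries ℕ ℚ) (μ : ℕ →₀ ℕ) :
    MvPowerSeries.coeff μ (psLog Ψ) =
      ∑ k ∈ Finset.Icc 1 (wdeg μ),
        ((-1 : ℚ) ^ (k + 1) / k) * MvPowerSeries.coeff μ ((Ψ - 1) ^ k) := rfl

lemma psDeriv_zero (i : ℕ) : psDeriv i (0 : MvPowerSeries ℕ ℚ) = 0 := by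
  ext m; simp [psDeriv_coeff]

lemma psDeriv_sum (i : ℕ) {α : Type*} (s : Finset α) (f : α → MvPowerSeries ℕ ℚ) :
    psDeriv i (∑ x ∈ s, f x) = ∑ x ∈ s, psDeriv i (f x) := by
  classical
  induction s using Finset.induction_on with
  | empty => simp [psDeriv_zero]
  | insert _ _ h ih => rw [Finset.sum_insert h, Finset.sum_insert h, psDeriv_add, ih]

lemma psDeriv_pow (i : ℕ) (G : MvPowerSeries ℕ ℚ) : ∀ k : ℕ,
    psDeriv i (G ^ (k+1)) = (k+1) • (G ^ k * psDeriv i G) := by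
  intro k
  induction k with
  | zero => simp
  | succ k ih =>
    have hmul : G ^ k * psDeriv i G * G = G ^ (k+1) * psDeriv i G := by ring
    rw [pow_succ, psDeriv_mul, ih, smul_mul_assoc, hmul, succ_nsmul, succ_nsmul, succ_nsmul]

section LogKey

variable (G : MvPowerSeries ℕ ℚ)

lemma coeff_pow_eq_zero (hG : ∀ μ, wdeg μ = 0 → MvPowerSeries.coeff μ G = 0) :
    ∀ (k : ℕ) (μ : ℕ →₀ ℕ), wdeg μ < k → MvPowerSeries.coeff μ (G ^ k) = 0 := by
  intro k
  induction k with
  | zero => intro μ h; omega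
  | succ k ih =>
    intro μ h
    rw [pow_succ, MvPowerSeries.coeff_mul]
    apply Finset.sum_eq_zero
    intro p hp
    rw [Finset.HasAntidiagonal.mem_antidiagonal] at hp
    have hw : wdeg p.1 + wdeg p.2 = wdeg μ := by rw [← wdeg_add, hp]
    by_cases h1 : wdeg p.1 < k
    · rw [ih p.1 h1, zero_mul]
    · have : wdeg p.2 = 0 := by omega
      rw [hG p.2 this, mul_zero]

/-- truncated log -/
noncomputable def logTrunc (M : ℕ) : MvPowerSeries ℕ ℚ :=
  ∑ k ∈ Finset.Icc 1 M, ((-1 : ℚ) ^ (k + 1) / k) • G ^ k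

lemma coeff_logTrunc (M : ℕ) (ν : ℕ →₀ ℕ) :
    MvPowerSeries.coeff ν (logTrunc G M) =
      ∑ k ∈ Finset.Icc 1 M, ((-1 : ℚ) ^ (k + 1) / k) * MvPowerSeries.coeff ν (G ^ k) := by
  rw [logTrunc, map_sum]
  exact Finset.sum_congr rfl fun k _ => by rw [map_smul, smul_eq_mul]

lemma telescope (i : ℕ) : ∀ M : ℕ,
    (1 + G) * psDeriv i (logTrunc G M) =
      psDeriv i G + (-1 : MvPowerSeries ℕ ℚ) ^ (M+1) * (G ^ M * psDeriv i G) := by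
  intro M
  induction M with
  | zero =>
    rw [logTrunc]
    simp [psDeriv_zero]
  | succ M ih =>
    have hsplit : logTrunc G (M+1) = logTrunc G M
        + ((-1 : ℚ) ^ (M + 1 + 1) / ((M + 1 : ℕ) : ℚ)) • G ^ (M+1) := by
      rw [logTrunc, logTrunc, Finset.sum_Icc_succ_top (by omega : 1 ≤ M + 1)]
    rw [hsplit, psDeriv_add, psDeriv_smul, psDeriv_pow i G M]
    have hns : (M + 1) • (G ^ M * psDeriv i G) = ((M : ℚ) + 1) • (G ^ M * psDeriv i G) := by
      rw [← Nat.cast_smul_eq_nsmul ℚ]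
      push_cast
      ring_nf
    rw [hns, smul_smul]
    have hc : ((-1 : ℚ) ^ (M + 1 + 1) / ((M + 1 : ℕ) : ℚ)) * ((M : ℚ) + 1) = (-1 : ℚ) ^ (M+2) := by
      have h0 : ((M : ℚ) + 1) ≠ 0 := by positivity
      push_cast
      field_simp
    rw [hc, MvPowerSeries.smul_eq_C_mul, map_pow, map_neg, map_one, mul_add, ih]
    ring
end LogKey

lemma tau_mul_psDeriv_psLog (G : MvPowerSeries ℕ ℚ)
    (hG : ∀ μ, wdeg μ = 0 → MvPowerSeries.coeff μ G = 0) (i : ℕ) :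
    (1 + G) * psDeriv i (psLog (1 + G)) = psDeriv i (1 + G) := by
  apply MvPowerSeries.ext
  intro μ
  set M := wdeg μ + i + 1 with hM
  have hcoeffs : ∀ ν : ℕ →₀ ℕ, wdeg ν ≤ wdeg μ →
      MvPowerSeries.coeff ν (psDeriv i (psLog (1+G))) =
      MvPowerSeries.coeff ν (psDeriv i (logTrunc G M)) := by
    intro ν hν
    rw [psDeriv_coeff, psDeriv_coeff, psLog_coeff, coeff_logTrunc]
    congr 1
    have hsub1 : (1 : MvPowerSeries ℕ ℚ) + G - 1 = G := by ring
    rw [hsub1]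
    refine Finset.sum_subset ?_ ?_
    · apply Finset.Icc_subset_Icc_right
      rw [wdeg_add, wdeg_single]; omega
    · intro k hk hk2
      rw [Finset.mem_Icc] at hk hk2
      have hwk : wdeg (ν + Finsupp.single i 1) < k := by
        rw [wdeg_add, wdeg_single] at hk2 ⊢
        omega
      rw [coeff_pow_eq_zero G hG k _ hwk, mul_zero]
  have h1 : MvPowerSeries.coeff μ ((1+G) * psDeriv i (psLog (1+G)))
      = MvPowerSeries.coeff μ ((1+G) * psDeriv i (logTrunc G M)) := by
    rw [MvPowerSeries.coeff_mul, MvPowerSeries.coeff_mul]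
    apply Finset.sum_congr rfl
    intro p hp
    rw [Finset.HasAntidiagonal.mem_antidiagonal] at hp
    have hw2 : wdeg p.2 ≤ wdeg μ := by
      have h := wdeg_add p.1 p.2
      rw [hp] at h
      omega
    rw [hcoeffs p.2 hw2]
  have h2 : MvPowerSeries.coeff μ
      ((-1 : MvPowerSeries ℕ ℚ)^(M+1) * (G^M * psDeriv i G)) = 0 := by
    rw [show ((-1 : MvPowerSeries ℕ ℚ)^(M+1)) = MvPowerSeries.C ((-1:ℚ)^(M+1)) by
      rw [map_pow, map_neg, map_one], MvPowerSeries.coeff_C_mul, MvPowerSeries.coeff_mul]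
    have : ∀ p ∈ Finset.HasAntidiagonal.antidiagonal μ,
        MvPowerSeries.coeff p.1 (G^M) * MvPowerSeries.coeff p.2 (psDeriv i G) = 0 := by
      intro p hp
      rw [Finset.HasAntidiagonal.mem_antidiagonal] at hp
      have hw1 : wdeg p.1 ≤ wdeg μ := by
        have h := wdeg_add p.1 p.2
        rw [hp] at h
        omega
      rw [coeff_pow_eq_zero G hG M p.1 (by omega), zero_mul]
    rw [Finset.sum_eq_zero this, mul_zero]
  rw [h1, telescope G i M, map_add, h2, add_zero, psDeriv_add, psDeriv_one, zero_add]

noncomputable def Fse (N : ℕ) (c : ℕ → ℚ) : ℕ → MvPowerSeries ℕ ℚ := fun n =>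
  if n = 0 then
    ((1 + ∑ i ∈ Finset.Icc 1 N, C (c i) * schurOnePart i : MvPolynomial ℕ ℚ) : MvPowerSeries ℕ ℚ)
  else ((∑ i ∈ Finset.Icc n N, C (c i) * schurOnePart (i - n) : MvPolynomial ℕ ℚ) : MvPowerSeries ℕ ℚ)

lemma pderiv_sum_schur (N k n b : ℕ) (c : ℕ → ℚ) (hk : 1 ≤ k) (hbn : n ≤ b) (hbk : b ≤ n + k) :
    pderiv k (∑ i ∈ Finset.Icc b N, C (c i) * schurOnePart (i - n)) =
      C ((k:ℚ)⁻¹) * ∑ i ∈ Finset.Icc (n+k) N, C (c i) * schurOnePart (i - (n+k)) := by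
  rw [map_sum]
  have step1 : ∀ i ∈ Finset.Icc b N,
      pderiv k (C (c i) * schurOnePart (i - n)) =
        if n + k ≤ i then C (c i) * (C ((k:ℚ)⁻¹) * schurOnePart (i - (n+k))) else 0 := by
    intro i hi
    rw [Finset.mem_Icc] at hi
    rw [pderiv_C_mul, pderiv_schur k (i-n) hk]
    by_cases h : n + k ≤ i
    · rw [if_pos (by omega : k ≤ i - n), if_pos h, Nat.sub_sub]
    · rw [if_neg (by omega : ¬ k ≤ i - n), if_neg h, mul_zero]
  rw [Finset.sum_congr rfl step1, Finset.sum_ite, Finset.sum_const_zero, add_zero]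
  have hfil : Finset.filter (fun i => n + k ≤ i) (Finset.Icc b N) = Finset.Icc (n+k) N := by
    ext i
    simp only [Finset.mem_filter, Finset.mem_Icc]
    omega
  rw [hfil, Finset.mul_sum]
  exact Finset.sum_congr rfl fun i _ => by ring

lemma psDeriv_Fse (N : ℕ) (c : ℕ → ℚ) (k n : ℕ) (hk : 1 ≤ k) :
    psDeriv k (Fse N c n) = MvPowerSeries.C ((k:ℚ)⁻¹) * Fse N c (n+k) := by
  have hnk : n + k ≠ 0 := by omega
  by_cases hn : n = 0
  · subst hn
    rw [Fse, if_pos rfl, coe_psDeriv, map_add, pderiv_one, zero_add]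
    have := pderiv_sum_schur N k 0 1 c hk (by omega) (by omega)
    simp only [Nat.sub_zero] at this
    rw [this]
    rw [Fse, if_neg hnk]
    push_cast [MvPolynomial.coe_mul, MvPolynomial.coe_C]
    rfl
  · rw [Fse, if_neg hn, coe_psDeriv, pderiv_sum_schur N k n n c hk le_rfl (by omega),
      Fse, if_neg hnk]
    push_cast [MvPolynomial.coe_mul, MvPolynomial.coe_C]
    rfl

lemma wdeg_zero : wdeg 0 = 0 := by simp [wdeg]

lemma constCoeff_sum_schur (N : ℕ) (c : ℕ → ℚ) (μ : ℕ →₀ ℕ) (hμ : wdeg μ = 0) :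
    MvPowerSeries.coeff μ
      ((∑ i ∈ Finset.Icc 1 N, C (c i) * schurOnePart i : MvPolynomial ℕ ℚ) : MvPowerSeries ℕ ℚ) = 0 := by
  rw [MvPolynomial.coeff_coe, MvPolynomial.coeff_sum]
  apply Finset.sum_eq_zero
  intro i hi
  rw [Finset.mem_Icc] at hi
  rw [MvPolynomial.coeff_C_mul, schur_coeff_eq_zero (by omega), mul_zero]

lemma psDeriv_C (i : ℕ) (q : ℚ) : psDeriv i (MvPowerSeries.C q) = 0 := by
  have : (MvPowerSeries.C q) = q • (1 : MvPowerSeries ℕ ℚ) := by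
    rw [MvPowerSeries.smul_eq_C_mul, mul_one]
  rw [this, psDeriv_smul, psDeriv_one, smul_zero]

lemma final_combination (A B C' D E S : MvPowerSeries ℕ ℚ)
    (hS : S^2 = B - 2*D + E) :
    (2:ℚ)⁻¹ • ((2:ℚ)⁻¹ • (A - B)) = (3:ℚ)⁻¹ • (A - C') - (2:ℚ)⁻¹ • S^2
      - (12:ℚ)⁻¹ • (A - 4*C' - 3*B + 12*D - 6*E) := by
  have h2 : (2:MvPowerSeries ℕ ℚ) * D = (2:ℚ) • D := by
    rw [MvPowerSeries.smul_eq_C_mul, map_ofNat]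
  have h4 : (4:MvPowerSeries ℕ ℚ) * C' = (4:ℚ) • C' := by
    rw [MvPowerSeries.smul_eq_C_mul, map_ofNat]
  have h3 : (3:MvPowerSeries ℕ ℚ) * B = (3:ℚ) • B := by
    rw [MvPowerSeries.smul_eq_C_mul, map_ofNat]
  have h12 : (12:MvPowerSeries ℕ ℚ) * D = (12:ℚ) • D := by
    rw [MvPowerSeries.smul_eq_C_mul, map_ofNat]
  have h6 : (6:MvPowerSeries ℕ ℚ) * E = (6:ℚ) • E := by
    rw [MvPowerSeries.smul_eq_C_mul, map_ofNat]
  rw [hS, h2, h4, h3, h12, h6]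
  module

/-- Let `N ≥ 1` and let `c_1, …, c_N` be rational numbers.  Let
`τ = 1 + ∑_{i=1}^N c_i·s_i`, where `s_i` is the Schur polynomial of the one-part
partition `(i)`.  Then `H = log τ` satisfies the KP equation
`∂²H/∂p_2² = ∂²H/∂p_3∂p_1 − (1/2)(∂²H/∂p_1²)² − (1/12)∂⁴H/∂p_1⁴`. -/
theorem KP_for_log_onePart_comb (N : ℕ) (hN : 1 ≤ N) (c : ℕ → ℚ) :
    let τ : MvPowerSeries ℕ ℚ :=
      ((1 + ∑ i ∈ Finset.Icc 1 N, C (c i) * schurOnePart i : MvPolynomial ℕ ℚ) :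
        MvPowerSeries ℕ ℚ)
    psDeriv 2 (psDeriv 2 (psLog τ)) =
      psDeriv 3 (psDeriv 1 (psLog τ))
        - (2 : ℚ)⁻¹ • (psDeriv 1 (psDeriv 1 (psLog τ))) ^ 2
        - (12 : ℚ)⁻¹ • psDeriv 1 (psDeriv 1 (psDeriv 1 (psDeriv 1 (psLog τ)))) := by
  intro τ
  have hτG : τ = 1 + ((∑ i ∈ Finset.Icc 1 N, C (c i) * schurOnePart i : MvPolynomial ℕ ℚ) :
      MvPowerSeries ℕ ℚ) := by
    rw [show τ = ((1 + ∑ i ∈ Finset.Icc 1 N, C (c i) * schurOnePart i :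
        MvPolynomial ℕ ℚ) : MvPowerSeries ℕ ℚ) from rfl,
      MvPolynomial.coe_add, MvPolynomial.coe_one]
  have hτF : τ = Fse N c 0 := by
    rw [hτG]
    simp [Fse]
  have hkey : ∀ i, τ * psDeriv i (psLog τ) = psDeriv i τ := by
    intro i
    rw [hτG]
    exact tau_mul_psDeriv_psLog _ (constCoeff_sum_schur N c) i
  have hconst : MvPowerSeries.constantCoeff τ = 1 := by
    rw [hτG, map_add, map_one]
    have := constCoeff_sum_schur N c 0 wdeg_zero
    rw [MvPowerSeries.coeff_zero_eq_constantCoeff] at this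
    rw [this, add_zero]
  set u := MvPowerSeries.invOfUnit τ 1 with hu_def
  have hu : τ * u = 1 := MvPowerSeries.mul_invOfUnit τ 1 (by rw [hconst]; rfl)
  have hsolve : ∀ Y X : MvPowerSeries ℕ ℚ, τ * Y = X → Y = u * X := by
    intro Y X h
    calc Y = (τ * u) * Y := by rw [hu, one_mul]
    _ = u * (τ * Y) := by ring
    _ = u * X := by rw [h]
  set H := psLog τ with hH
  have hDτ : ∀ k, 1 ≤ k → psDeriv k τ = MvPowerSeries.C ((k:ℚ)⁻¹) * Fse N c k := by
    intro k hk
    rw [hτF, psDeriv_Fse N c k 0 hk, zero_add]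
  have hDH : ∀ k, 1 ≤ k →
      psDeriv k H = u * (MvPowerSeries.C ((k:ℚ)⁻¹) * Fse N c k) :=
    fun k hk => hsolve _ _ (by rw [hkey k, hDτ k hk])
  have hDu : ∀ k, 1 ≤ k →
      psDeriv k u = -(MvPowerSeries.C ((k:ℚ)⁻¹) * (u * u * Fse N c k)) := by
    intro k hk
    have h0 : psDeriv k (τ * u) = 0 := by rw [hu, psDeriv_one]
    rw [psDeriv_mul] at h0
    have h1 : τ * psDeriv k u = -(psDeriv k τ * u) := by linear_combination h0
    have h2 := hsolve _ _ h1
    rw [h2, hDτ k hk]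
    ring
  set F1 := Fse N c 1 with hF1
  set F2 := Fse N c 2 with hF2
  set F3 := Fse N c 3 with hF3
  set F4 := Fse N c 4 with hF4
  have hH1 : psDeriv 1 H = u * F1 := by
    have := hDH 1 le_rfl
    norm_num at this
    exact this
  have hDu1 : psDeriv 1 u = -(u * u * F1) := by
    have := hDu 1 le_rfl
    norm_num at this
    exact this
  have hDF1 : psDeriv 1 F1 = F2 := by
    have := psDeriv_Fse N c 1 1 le_rfl
    norm_num at this
    exact this
  have hDF2 : psDeriv 1 F2 = F3 := by
    have := psDeriv_Fse N c 1 2 le_rfl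
    rw [add_comm 2 1] at this
    norm_num at this
    exact this
  have hDF3 : psDeriv 1 F3 = F4 := by
    have := psDeriv_Fse N c 1 3 le_rfl
    rw [add_comm 3 1] at this
    norm_num at this
    exact this
  have hD2F2 : psDeriv 2 F2 = MvPowerSeries.C ((2:ℚ)⁻¹) * F4 := by
    have := psDeriv_Fse N c 2 2 (by norm_num)
    simp only [Nat.cast_ofNat, show (2+2:ℕ) = 4 from rfl] at this
    exact this
  have hD3F1 : psDeriv 3 F1 = MvPowerSeries.C ((3:ℚ)⁻¹) * F4 := by
    have := psDeriv_Fse N c 3 1 (by norm_num)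
    simp only [Nat.cast_ofNat, show (1+3:ℕ) = 4 from rfl] at this
    exact this
  have hDu2 : psDeriv 2 u = -(MvPowerSeries.C ((2:ℚ)⁻¹) * (u * u * F2)) := by
    have := hDu 2 (by norm_num)
    simp only [Nat.cast_ofNat] at this
    exact this
  have hDu3 : psDeriv 3 u = -(MvPowerSeries.C ((3:ℚ)⁻¹) * (u * u * F3)) := by
    have := hDu 3 (by norm_num)
    simp only [Nat.cast_ofNat] at this
    exact this
  have hH2 : psDeriv 2 H = u * (MvPowerSeries.C ((2:ℚ)⁻¹) * F2) := by
    have := hDH 2 (by norm_num)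
    simp only [Nat.cast_ofNat] at this
    exact this
  -- iterated p1-derivatives
  have hH11 : psDeriv 1 (psDeriv 1 H) = u * F2 - u*u*(F1*F1) := by
    rw [hH1, psDeriv_mul, hDu1, hDF1]
    ring
  have hH111 : psDeriv 1 (psDeriv 1 (psDeriv 1 H)) =
      u*F3 - 3*(u*u*(F1*F2)) + 2*(u*u*u*(F1*(F1*F1))) := by
    rw [hH11, psDeriv_sub]
    simp only [psDeriv_mul]
    rw [hDu1, hDF1, hDF2]
    ring
  have hH1111 : psDeriv 1 (psDeriv 1 (psDeriv 1 (psDeriv 1 H))) =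
      u*F4 - 4*(u*u*(F1*F3)) - 3*(u*u*(F2*F2)) + 12*(u*u*u*(F1*(F1*F2)))
        - 6*(u*u*u*(u*(F1*(F1*(F1*F1))))) := by
    rw [hH111]
    simp only [psDeriv_sub, psDeriv_add, psDeriv_mul]
    have hn3 : psDeriv 1 (3 : MvPowerSeries ℕ ℚ) = 0 := by
      rw [show (3 : MvPowerSeries ℕ ℚ) = MvPowerSeries.C 3 from (map_ofNat _ 3).symm,
        psDeriv_C]
    have hn2 : psDeriv 1 (2 : MvPowerSeries ℕ ℚ) = 0 := by
      rw [show (2 : MvPowerSeries ℕ ℚ) = MvPowerSeries.C 2 from (map_ofNat _ 2).symm,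
        psDeriv_C]
    rw [hn3, hn2, hDu1, hDF1, hDF2, hDF3]
    ring
  have hH22 : psDeriv 2 (psDeriv 2 H) =
      MvPowerSeries.C ((2:ℚ)⁻¹) * (MvPowerSeries.C ((2:ℚ)⁻¹) *
        (u*F4 - u*u*(F2*F2))) := by
    rw [hH2]
    simp only [psDeriv_mul]
    rw [psDeriv_C, hDu2, hD2F2]
    ring
  have hH13 : psDeriv 3 (psDeriv 1 H) =
      MvPowerSeries.C ((3:ℚ)⁻¹) * (u*F4 - u*u*(F1*F3)) := by
    rw [hH1, psDeriv_mul, hDu3, hD3F1]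
    ring
  rw [hH22, hH13, hH1111, hH11]
  simp only [← MvPowerSeries.smul_eq_C_mul]
  exact final_combination (u*F4) (u*u*(F2*F2)) (u*u*(F1*F3)) (u*u*u*(F1*(F1*F2)))
    (u*u*u*(u*(F1*(F1*(F1*F1))))) (u * F2 - u*u*(F1*F1)) (by ring)
end
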